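/- arXiv:0706.4257 — 2 statements merged into one kernel-verified Lean document; each statement's English description precedes it below -/
import Mathlib

section
/- Let X = (X,d,μ) be a metric measure space satisfying the locally doubling property, and fix u, v > 0. Then there exists a constant C = C(u,v) < ∞ such that for every Borel subset A ⊆ X that is u-thick (i.e. A is a union of closed balls of radius u), one has μ([A]_v) ≤ C·μ(A), where [A]_v = {x ∈ X : d(x,A) ≤ v}. -/
open MeasureTheory Set Filter Topology ENNReal Pointwise

section Preamble

variable {G : Type*}

/-- Word length with respect to a generating set `S`: least `n` with `g ∈ Sⁿ`. -/
noncomputable def wordLength [Group G] (S : Set G) (g : G) : ℕ := sInf {n : ℕ | g ∈ S ^ n}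

/-- Left-invariant word metric `d_S(g,h)`. -/
noncomputable def wordDist [Group G] (S : Set G) (g h : G) : ℕ := wordLength S (g⁻¹ * h)

/-- Closed ball of radius `r` around the identity for the word metric. -/
def wordBall [Group G] (S : Set G) (r : ℝ) : Set G := {g : G | (wordLength S g : ℝ) ≤ r}

/-- `S` is a compact symmetric generating subset of `G`. -/
structure IsCompactSymmGen [Group G] [TopologicalSpace G] (S : Set G) : Prop where
  isCompact : IsCompact S
  symm : S⁻¹ = S
  gen : ∀ g : G, ∃ n : ℕ, g ∈ S ^ n

/-- The ratio `‖f‖_p / sup_{s ∈ S} ‖f - λ(s)f‖_p`, where `λ(s)f(x) = f(s⁻¹x)`. -/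
noncomputable def lpRatio [Group G] [MeasurableSpace G] (μ : Measure G) (S : Set G)
    (p : ℝ≥0∞) (f : G → ℝ) : ℝ≥0∞ :=
  eLpNorm f p μ / ⨆ s ∈ S, eLpNorm (f - fun x => f (s⁻¹ * x)) p μ

/-- `J_p(A)`: the supremum of `‖f‖_p / sup_{s∈S} ‖f - λ(s)f‖_p` over nonzero `f ∈ L^p`
supported in `A`. -/
noncomputable def Jprof [Group G] [MeasurableSpace G] (μ : Measure G) (S : Set G)
    (p : ℝ≥0∞) (A : Set G) : ℝ≥0∞ :=
  ⨆ f ∈ {f : G → ℝ | MemLp f p μ ∧ eLpNorm f p μ ≠ 0 ∧ ∀ x ∉ A, f x = 0},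
    lpRatio μ S p f

/-- The `L^p`-isoperimetric profile `j_{G,S,p}(v) = sup {J_p(A) : μ(A) ≤ v}`. -/
noncomputable def jProf [Group G] [MeasurableSpace G] (μ : Measure G) (S : Set G)
    (p : ℝ≥0∞) : ℝ → ℝ≥0∞ :=
  fun v => ⨆ A ∈ {A : Set G | MeasurableSet A ∧ μ A ≤ ENNReal.ofReal v}, Jprof μ S p A

/-- The `L^p`-isoperimetric profile inside balls, `J^b_{G,S,p}(r) = J_p(B_S(e,r))`. -/
noncomputable def JbProf [Group G] [MeasurableSpace G] (μ : Measure G) (S : Set G)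
    (p : ℝ≥0∞) : ℝ → ℝ≥0∞ :=
  fun r => Jprof μ S p (wordBall S r)

/-- `f ≼ g` : there are `C ≥ 1`, `t₀` with `f(t) ≤ C·g(C·t)` for `t ≥ t₀`. -/
def AsympLe (f g : ℝ → ℝ≥0∞) : Prop :=
  ∃ C : ℝ, 1 ≤ C ∧ ∃ t₀ : ℝ, ∀ t ≥ t₀, f t ≤ ENNReal.ofReal C * g (C * t)

/-- Asymptotic equivalence `f ≈ g`. -/
def AsympEquiv (f g : ℝ → ℝ≥0∞) : Prop := AsympLe f g ∧ AsympLe g f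

end Preamble

section MetricMeasurePreamble

variable {X X' Y Z : Type*}

/-- Closed ball for an abstract distance function. -/
def dBall (d : X → X → ℝ) (x : X) (r : ℝ) : Set X := {y : X | d x y ≤ r}

/-- The measure `μ` is finite on bounded subsets (for an abstract distance: subsets of
balls). -/
def FiniteOnBounded [MeasurableSpace X] (d : X → X → ℝ) (μ : MeasureTheory.Measure X) : Prop :=
  ∀ x : X, ∀ r : ℝ, μ (dBall d x r) < ⊤

/-- The locally doubling property: for every `r > 0` there is `C_r` with
`V(x,2r) ≤ C_r · V(x,r)` for every `x`. -/
def LocDoubling [MeasurableSpace X] (d : X → X → ℝ) (μ : MeasureTheory.Measure X) : Prop :=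
  ∀ r : ℝ, 0 < r → ∃ C : ℝ, 0 < C ∧
    ∀ x : X, μ (dBall d x (2 * r)) ≤ ENNReal.ofReal C * μ (dBall d x r)

/-- Local norm of the gradient at scale `h`:
`|∇f|_h(x) = sup {|f(y) − f(x)| : d(x,y) ≤ h}`. -/
noncomputable def locGrad (d : X → X → ℝ) (h : ℝ) (f : X → ℝ) (x : X) : ℝ :=
  ⨆ y : dBall d x h, |f (y : X) - f x|

/-- Sobolev inequality `(S^p_φ)` at scale `h` for the metric measure space `(X,d,μ)`:
`‖f‖_p ≤ C·φ(C'·μ(Ω))·‖|∇f|_h‖_p` for every compact `Ω` and every bounded Borel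
function `f` supported in `Ω` (with Borel measurable local gradient). -/
def SobolevIneq [TopologicalSpace X] [MeasurableSpace X] (d : X → X → ℝ)
    (μ : MeasureTheory.Measure X) (p : ℝ≥0∞) (φ : ℝ → ℝ) (h : ℝ) : Prop :=
  ∃ C : ℝ, 0 < C ∧ ∃ C' : ℝ, 0 < C' ∧
    ∀ (Ω : Set X) (f : X → ℝ), IsCompact Ω → Measurable f →
      (∃ M : ℝ, ∀ x : X, |f x| ≤ M) → (∀ x ∉ Ω, f x = 0) →
      Measurable (locGrad d h f) →
      MeasureTheory.eLpNorm f p μ ≤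
        ENNReal.ofReal (C * φ (C' * (μ Ω).toReal)) *
          MeasureTheory.eLpNorm (locGrad d h f) p μ

/-- Parameters of a large-scale equivalence: the control functions `ρ₋, ρ₊`, the
almost-onto constant `C`, and the volume comparison data `r₀, (C_r)`. -/
structure LSEParams where
  rhoMinus : ℝ → ℝ
  rhoPlus : ℝ → ℝ
  C : ℝ
  r0 : ℝ
  Cr : ℝ → ℝ

/-- `F` is a large-scale equivalence, with parameters `P`, from the subset `A` of the
metric measure space `(X, dX, μ)` onto the subset `B` of `(X', dX', ν)`. -/
def IsLSEBetween [MeasurableSpace X] [MeasurableSpace X']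
    (dX : X → X → ℝ) (A : Set X) (μ : MeasureTheory.Measure X)
    (dX' : X' → X' → ℝ) (B : Set X') (ν : MeasureTheory.Measure X')
    (F : X → X') (P : LSEParams) : Prop :=
  Monotone P.rhoMinus ∧ Monotone P.rhoPlus ∧
  Filter.Tendsto P.rhoMinus Filter.atTop Filter.atTop ∧
  (∀ x ∈ A, F x ∈ B) ∧
  (∀ x ∈ A, ∀ y ∈ A,
    P.rhoMinus (dX x y) ≤ dX' (F x) (F y) ∧ dX' (F x) (F y) ≤ P.rhoPlus (dX x y)) ∧
  (∀ b ∈ B, ∃ a ∈ A, dX' (F a) b ≤ P.C) ∧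
  (∀ r : ℝ, P.r0 ≤ r → 0 < P.Cr r ∧ ∀ x ∈ A,
    ENNReal.ofReal (P.Cr r)⁻¹ * μ (dBall dX x r ∩ A) ≤ ν (dBall dX' (F x) r ∩ B) ∧
    ν (dBall dX' (F x) r ∩ B) ≤ ENNReal.ofReal (P.Cr r) * μ (dBall dX x r ∩ A))

/-- `(X, dX, μ)` is large-scale foliated by `(Y, dY, lam)`, with base `(Z, ν)`, leaves
`leaf z`, leaf measures `lamz z`, large-scale equivalences `hmap z : Y → Y_z` with
parameters `P` independent of `z`. -/
def IsLSFoliation [TopologicalSpace X] [MeasurableSpace X] [MeasurableSpace Y]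
    [MeasurableSpace Z]
    (dX : X → X → ℝ) (μ : MeasureTheory.Measure X)
    (dY : Y → Y → ℝ) (lam : MeasureTheory.Measure Y)
    (ν : MeasureTheory.Measure Z) (leaf : Z → Set X)
    (lamz : Z → MeasureTheory.Measure X) (hmap : Z → Y → X) (P : LSEParams) : Prop :=
  (∀ x : X, ∃! z : Z, x ∈ leaf z) ∧
  (∀ z : Z, lamz z (leaf z)ᶜ = 0) ∧
  (∀ f : X → ℝ, Continuous f → HasCompactSupport f →
    ∫ x, f x ∂μ = ∫ z, (∫ x, f x ∂(lamz z)) ∂ν) ∧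
  (∀ᵐ z ∂ν, IsLSEBetween dY Set.univ lam dX (leaf z) (lamz z) (hmap z) P)

/-- A normal large-scale foliation: a large-scale foliation such that, for a uniform
constant `C ≥ 1`, every `x` in a leaf satisfies `C⁻¹ ≤ V_X(x,1) ≤ C` and
`C⁻¹ ≤ λ_z(B̄(x,1)) ≤ C`. -/
def IsNormalLSFoliation [TopologicalSpace X] [MeasurableSpace X] [MeasurableSpace Y]
    [MeasurableSpace Z]
    (dX : X → X → ℝ) (μ : MeasureTheory.Measure X)
    (dY : Y → Y → ℝ) (lam : MeasureTheory.Measure Y)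
    (ν : MeasureTheory.Measure Z) (leaf : Z → Set X)
    (lamz : Z → MeasureTheory.Measure X) (hmap : Z → Y → X) (P : LSEParams) : Prop :=
  IsLSFoliation dX μ dY lam ν leaf lamz hmap P ∧
  ∃ C : ℝ, 1 ≤ C ∧ ∀ z : Z, ∀ x ∈ leaf z,
    (ENNReal.ofReal C)⁻¹ ≤ μ (dBall dX x 1) ∧ μ (dBall dX x 1) ≤ ENNReal.ofReal C ∧
    (ENNReal.ofReal C)⁻¹ ≤ lamz z (dBall dX x 1) ∧
    lamz z (dBall dX x 1) ≤ ENNReal.ofReal C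

end MetricMeasurePreamble

/-!
Vitali's covering lemma extracts from the centres of a `u`-thick set `A` a subfamily `J` whose
balls of radius `u + 2v` are disjoint, while the concentric balls of radius `4(u + 2v)` cover
`[A]_v`. Iterated doubling bounds the measure of each of these by a fixed multiple of the
`u`-ball with the same centre, and the `u`-balls around `J` are disjoint and lie in `A`.
-/

open Metric

@[simp]
lemma dBall_dist_eq_closedBall {X : Type*} [MetricSpace X] (x : X) (r : ℝ) :
    dBall (fun a b : X => dist a b) x r = closedBall x r := by
  ext y; simp [dBall, dist_comm]

namespace LocDoubling

variable {X : Type*} [MetricSpace X] [MeasurableSpace X] {μ : Measure X} {u : ℝ}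

lemma exists_measure_closedBall_two_pow_mul_le (hdbl : LocDoubling (fun x y : X => dist x y) μ)
    (hu : 0 < u) (n : ℕ) :
    ∃ D : ℝ, 0 < D ∧ ∀ x : X,
      μ (closedBall x (2 ^ n * u)) ≤ ENNReal.ofReal D * μ (closedBall x u) := by
  induction n with
  | zero => exact ⟨1, one_pos, fun x => by simp⟩
  | succ n ih =>
    obtain ⟨D, hD, hDle⟩ := ih
    obtain ⟨C, hC, hCle⟩ := hdbl (2 ^ n * u) (by positivity)
    refine ⟨C * D, by positivity, fun x => ?_⟩
    calc μ (closedBall x (2 ^ (n + 1) * u))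
        = μ (closedBall x (2 * (2 ^ n * u))) := by ring_nf
      _ ≤ ENNReal.ofReal C * μ (closedBall x (2 ^ n * u)) := by simpa using hCle x
      _ ≤ ENNReal.ofReal C * (ENNReal.ofReal D * μ (closedBall x u)) := by gcongr; exact hDle x
      _ = ENNReal.ofReal (C * D) * μ (closedBall x u) := by
          rw [ENNReal.ofReal_mul hC.le, mul_assoc]

lemma exists_measure_closedBall_le_mul (hdbl : LocDoubling (fun x y : X => dist x y) μ)
    (hu : 0 < u) (R : ℝ) :
    ∃ D : ℝ, 0 < D ∧ ∀ x : X, μ (closedBall x R) ≤ ENNReal.ofReal D * μ (closedBall x u) := by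
  obtain ⟨n, hn⟩ := pow_unbounded_of_one_lt (R / u) one_lt_two
  obtain ⟨D, hD, hDle⟩ := hdbl.exists_measure_closedBall_two_pow_mul_le hu n
  have hR : R ≤ 2 ^ n * u := by rw [div_lt_iff₀ hu] at hn; exact hn.le
  exact ⟨D, hD, fun x => (measure_mono (closedBall_subset_closedBall hR)).trans (hDle x)⟩

/-- A null ball would make every concentric ball null, hence `μ = 0`. -/
lemma measure_closedBall_pos (hdbl : LocDoubling (fun x y : X => dist x y) μ) (hu : 0 < u)
    (hμ : μ ≠ 0) (x : X) : 0 < μ (closedBall x u) := by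
  refine pos_iff_ne_zero.2 fun hx => hμ (Measure.measure_univ_eq_zero.1 ?_)
  rw [← iUnion_closedBall_nat x]
  refine measure_iUnion_null fun n => ?_
  obtain ⟨D, -, hDle⟩ := hdbl.exists_measure_closedBall_le_mul hu n
  simpa [hx] using hDle x

end LocDoubling

lemma Set.PairwiseDisjoint.countable_of_measure_biUnion_ne_top {ι α : Type*}
    [MeasurableSpace α] {μ : Measure α} {J : Set ι} {s : ι → Set α} (hJ : J.PairwiseDisjoint s)
    (hs : ∀ i ∈ J, MeasurableSet (s i)) (hpos : ∀ i ∈ J, 0 < μ (s i))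
    (hfin : μ (⋃ i ∈ J, s i) ≠ ∞) : J.Countable := by
  have hcount := Measure.countable_meas_pos_of_disjoint_of_meas_iUnion_ne_top μ
    (As := fun i : J => s i) (fun i => hs i i.2)
    (fun i j hij => hJ i.2 j.2 (Subtype.coe_injective.ne hij)) (by rwa [iUnion_subtype])
  have hall : {i : J | 0 < μ (s i)} = univ := eq_univ_of_forall fun i => hpos i i.2
  rw [hall, countable_univ_iff] at hcount
  exact countable_coe_iff.1 hcount

section Covering

variable {X : Type*} [MetricSpace X]

lemma cthickening_biUnion_closedBall_subset (I : Set X) {u v : ℝ} (hv : 0 < v) :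
    cthickening v (⋃ x ∈ I, closedBall x u) ⊆ ⋃ x ∈ I, closedBall x (u + 2 * v) := by
  refine (cthickening_subset_iUnion_closedBall_of_lt _ (by positivity)
    (by linarith : v < 2 * v)).trans fun y hy => ?_
  obtain ⟨a, ha, hya⟩ := mem_iUnion₂.1 hy
  obtain ⟨x, hx, hax⟩ := mem_iUnion₂.1 ha
  refine mem_biUnion hx ?_
  rw [mem_closedBall] at *
  linarith [dist_triangle y a x]

lemma exists_pairwiseDisjoint_closedBall_cover (I : Set X) {u w : ℝ} (huw : u ≤ w) :
    ∃ J ⊆ I, J.PairwiseDisjoint (closedBall · u) ∧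
      ⋃ x ∈ I, closedBall x w ⊆ ⋃ b ∈ J, closedBall b (4 * w) := by
  obtain ⟨J, hJI, hJ, hcov⟩ := Vitali.exists_disjoint_subfamily_covering_enlargement_closedBall
    I id (fun _ => w) w (fun _ _ => le_rfl) 4 (by norm_num)
  refine ⟨J, hJI, hJ.mono fun b => closedBall_subset_closedBall huw,
    iUnion₂_subset fun x hx => ?_⟩
  obtain ⟨b, hb, hxb⟩ := hcov x hx
  exact hxb.trans (subset_biUnion_of_mem (u := (closedBall · (4 * w))) hb)

end Covering

/-- If the right-hand side is finite, disjointness and positivity force `J` to be countable,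
so that countable subadditivity applies. -/
lemma measure_biUnion_closedBall_le_mul {X : Type*} [MetricSpace X] [MeasurableSpace X]
    [OpensMeasurableSpace X] {μ : Measure X} {J : Set X} {u R : ℝ} {D : ℝ≥0∞} (hD₀ : D ≠ 0)
    (hJ : J.PairwiseDisjoint (closedBall · u)) (hpos : ∀ b ∈ J, 0 < μ (closedBall b u))
    (hD : ∀ x, μ (closedBall x R) ≤ D * μ (closedBall x u)) :
    μ (⋃ b ∈ J, closedBall b R) ≤ D * μ (⋃ b ∈ J, closedBall b u) := by
  rcases eq_or_ne (μ (⋃ b ∈ J, closedBall b u)) ∞ with htop | hfin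
  · simp [htop, hD₀]
  have hJc : J.Countable :=
    hJ.countable_of_measure_biUnion_ne_top (fun _ _ => measurableSet_closedBall) hpos hfin
  calc μ (⋃ b ∈ J, closedBall b R) ≤ ∑' b : J, μ (closedBall (b : X) R) :=
        measure_biUnion_le μ hJc _
    _ ≤ ∑' b : J, D * μ (closedBall (b : X) u) := ENNReal.tsum_le_tsum fun b => hD b
    _ = D * μ (⋃ b ∈ J, closedBall b u) := by
        rw [ENNReal.tsum_mul_left, measure_biUnion hJc hJ fun _ _ => measurableSet_closedBall]

theorem measure_cthickening_of_thick_general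
    {X : Type*} [MetricSpace X] [MeasurableSpace X] [BorelSpace X]
    (μ : Measure X)
    (hdbl : LocDoubling (fun x y : X => dist x y) μ)
    (u v : ℝ) (hu : 0 < u) (hv : 0 < v) :
    ∃ C : ℝ, 0 < C ∧ ∀ A : Set X, MeasurableSet A →
      (∃ I : Set X, A = ⋃ x ∈ I, Metric.closedBall x u) →
      μ (Metric.cthickening v A) ≤ ENNReal.ofReal C * μ A := by
  obtain ⟨D, hD, hDle⟩ := hdbl.exists_measure_closedBall_le_mul hu (4 * (u + 2 * v))
  refine ⟨D, hD, ?_⟩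
  rintro A - ⟨I, rfl⟩
  rcases eq_or_ne μ 0 with rfl | hμ
  · simp
  obtain ⟨J, hJI, hJ, hcov⟩ :=
    exists_pairwiseDisjoint_closedBall_cover I (u := u) (w := u + 2 * v) (by linarith)
  calc μ (cthickening v (⋃ x ∈ I, closedBall x u))
      ≤ μ (⋃ b ∈ J, closedBall b (4 * (u + 2 * v))) :=
        measure_mono ((cthickening_biUnion_closedBall_subset I hv).trans hcov)
    _ ≤ ENNReal.ofReal D * μ (⋃ b ∈ J, closedBall b u) :=
        measure_biUnion_closedBall_le_mul (by simpa using hD) hJ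
          (fun b _ => hdbl.measure_closedBall_pos hu hμ b) hDle
    _ ≤ ENNReal.ofReal D * μ (⋃ x ∈ I, closedBall x u) :=
        mul_le_mul_right (measure_mono (biUnion_subset_biUnion_left hJI)) _

/-- in a locally doubling metric measure space, for fixed `u, v > 0` there is
a constant `C = C(u,v)` such that every `u`-thick Borel set `A` (a union of closed balls of
radius `u`) satisfies `μ([A]_v) ≤ C·μ(A)`, where `[A]_v` is the closed `v`-neighborhood. -/
theorem measure_cthickening_of_thick
    {X : Type*} [MetricSpace X] [MeasurableSpace X] [BorelSpace X]
    (μ : Measure X)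
    (hμfin : FiniteOnBounded (fun x y : X => dist x y) μ)
    (hdbl : LocDoubling (fun x y : X => dist x y) μ)
    (u v : ℝ) (hu : 0 < u) (hv : 0 < v) :
    ∃ C : ℝ, 0 < C ∧ ∀ A : Set X, MeasurableSet A →
      (∃ I : Set X, A = ⋃ x ∈ I, Metric.closedBall x u) →
      μ (Metric.cthickening v A) ≤ ENNReal.ofReal C * μ A :=
  measure_cthickening_of_thick_general μ hdbl u v hu hv
end

section
/- Let X = (X,d_X,μ) and Y = (Y,d_Y,λ) be locally doubling metric measure spaces and assume X is normally large-scale foliated by Y, with leaves (Y_z)_{z∈Z} and leaf measures (λ_z). Then there exist parameters (ρ₋, ρ₊, C, r₀, (C_r)), independent of z, such that for ν-almost every z ∈ Z the inclusion map (Y_z, d_X restricted, λ_z) → ([Y_z]_1, d_X restricted, μ restricted to [Y_z]_1) is a large-scale equivalence with these parameters, where [Y_z]_1 = {x ∈ X : d_X(x, Y_z) ≤ 1} is the 1-neighborhood of Y_z in X. -/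
open MeasureTheory Set Filter Topology ENNReal Pointwise

/-!
The inclusion is an isometry and every point of `[Y_z]_1` lies within distance `2` of the leaf,
so only the comparison of volumes needs an argument. Normality bounds the `μ`- and `λ_z`-mass of
unit balls centred on a leaf above and below, uniformly in `z`, and local doubling of `μ` extends
this to any fixed radius. Counting a maximal separated net of the leaf then gives
`μ(B(x,r) ∩ [Y_z]_1) ≲ λ_z(B(x,r+3))` and `λ_z(B(x,r)) ≲ μ(B(x,r+1) ∩ [Y_z]_1)`. The shifts of
radius are absorbed because `λ_z` is doubling at large scales with constants independent of `z`:
the leaf is large-scale equivalent to `Y`, with uniform parameters, and `λ` is locally doubling.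
-/

open Metric
open scoped NNReal

section

variable {X : Type*} [MetricSpace X]

theorem dBall_dist (x : X) (r : ℝ) : dBall (fun a b : X => dist a b) x r = closedBall x r := by
  ext y
  simp [dBall, dist_comm]

theorem exists_separated_cover (s : Set X) {δ : ℝ} (hδ : 0 ≤ δ) :
    ∃ N ⊆ s, N.Pairwise (fun a b => δ < dist a b) ∧ ∀ y ∈ s, ∃ t ∈ N, dist y t ≤ δ := by
  obtain ⟨N, hN⟩ := zorn_subset {N | N ⊆ s ∧ IsSeparated (ENNReal.ofReal δ) N} fun c hc hchain =>
    ⟨⋃₀ c, ⟨sUnion_subset fun t ht => (hc ht).1,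
      (pairwise_sUnion hchain.directedOn).2 fun t ht => (hc ht).2⟩, fun _ => subset_sUnion_of_mem⟩
  have hcover := (IsCover.of_maximal_isSeparated (ε := δ.toNNReal) hN).subset_iUnion_closedBall
  refine ⟨N, hN.prop.1, fun a ha b hb hab => ?_, fun y hy => ?_⟩
  · have hsep : ENNReal.ofReal δ < edist a b := hN.prop.2 ha hb hab
    rwa [edist_dist, ENNReal.ofReal_lt_ofReal_iff_of_nonneg hδ] at hsep
  · obtain ⟨t, ht, hyt⟩ := mem_iUnion₂.1 (hcover hy)
    exact ⟨t, ht, by simpa [Real.coe_toNNReal _ hδ] using hyt⟩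

variable [MeasurableSpace X] {μ ν m : Measure X} {L : Set X}

theorem LocDoubling.exists_measure_closedBall_le_mul_s12 (h : LocDoubling (fun x y : X => dist x y) μ)
    {r : ℝ} (hr : 0 < r) (R : ℝ) :
    ∃ D : ℝ≥0, D ≠ 0 ∧ ∀ x, μ (closedBall x R) ≤ D * μ (closedBall x r) := by
  have hpow : ∀ n : ℕ, ∃ D : ℝ≥0, D ≠ 0 ∧
      ∀ x, μ (closedBall x (2 ^ n * r)) ≤ D * μ (closedBall x r) := by
    intro n
    induction n with
    | zero => exact ⟨1, one_ne_zero, fun x => by simp⟩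
    | succ n ih =>
      obtain ⟨D, hD, hDx⟩ := ih
      obtain ⟨d, hd, hdx⟩ := h (2 ^ n * r) (by positivity)
      refine ⟨d.toNNReal * D, mul_ne_zero (by simpa using hd) hD, fun x => ?_⟩
      calc μ (closedBall x (2 ^ (n + 1) * r))
          ≤ ENNReal.ofReal d * μ (closedBall x (2 ^ n * r)) := by
            simpa only [dBall_dist, pow_succ, mul_comm _ (2 : ℝ), mul_assoc] using hdx x
        _ ≤ ENNReal.ofReal d * (D * μ (closedBall x r)) := by gcongr; exact hDx x
        _ = (d.toNNReal * D : ℝ≥0) * μ (closedBall x r) := by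
            rw [ENNReal.coe_mul, mul_assoc]; rfl
  obtain ⟨n, hn⟩ := pow_unbounded_of_one_lt (R / r) one_lt_two
  obtain ⟨D, hD, hDx⟩ := hpow n
  refine ⟨D, hD, fun x => (measure_mono (closedBall_subset_closedBall ?_)).trans (hDx x)⟩
  exact (div_le_iff₀ hr).1 hn.le

theorem LocDoubling.exists_inv_le_measure_closedBall
    (h : LocDoubling (fun x y : X => dist x y) μ) {r : ℝ} (hr : 0 < r) {C : ℝ≥0} (hC : C ≠ 0) :
    ∃ c : ℝ≥0, c ≠ 0 ∧
      ∀ x, (C : ℝ≥0∞)⁻¹ ≤ μ (closedBall x 1) → (c : ℝ≥0∞)⁻¹ ≤ μ (closedBall x r) := by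
  obtain ⟨D, hD, hDx⟩ := h.exists_measure_closedBall_le_mul_s12 hr 1
  refine ⟨C * D, mul_ne_zero hC hD, fun x hx => ?_⟩
  rw [ENNReal.coe_mul, ENNReal.mul_inv (by simp [hC]) (by simp), mul_comm,
    ENNReal.inv_mul_le_iff (by simpa using hD) ENNReal.coe_ne_top]
  exact hx.trans (hDx x)

def inclusionLSEParams (δ r₀ : ℝ) (K : ℝ → ℝ≥0) : LSEParams where
  rhoMinus := id
  rhoPlus := id
  C := δ + 1
  r0 := r₀
  Cr r := max (K r) 1

theorem isLSEBetween_id_cthickening {δ r₀ : ℝ} (hδ : 0 ≤ δ) {K : ℝ → ℝ≥0}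
    (hK : ∀ r ≥ r₀, ∀ x ∈ L, m (closedBall x r ∩ L) ≤ K r * μ (closedBall x r ∩ cthickening δ L) ∧
      μ (closedBall x r ∩ cthickening δ L) ≤ K r * m (closedBall x r ∩ L)) :
    IsLSEBetween (fun x y : X => dist x y) L m (fun x y : X => dist x y) (cthickening δ L) μ id
      (inclusionLSEParams δ r₀ K) := by
  refine ⟨monotone_id, monotone_id, tendsto_id, fun x hx => self_subset_cthickening L hx,
    fun x _ y _ => ⟨le_rfl, le_rfl⟩, fun b hb => ?_,
    fun r hr => ⟨by simp [inclusionLSEParams], fun x hx => ?_⟩⟩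
  · obtain ⟨a, ha, hba⟩ := mem_thickening_iff.1
      (cthickening_subset_thickening' (by linarith) (lt_add_one δ) L hb)
    exact ⟨a, ha, (dist_comm a b).trans_le hba.le⟩
  · obtain ⟨hle, hge⟩ := hK r hr x hx
    have hk : (0 : ℝ) < (max (K r) 1 : ℝ≥0) := by positivity
    rw [show (inclusionLSEParams δ r₀ K).Cr r = (max (K r) 1 : ℝ≥0) from rfl,
      ENNReal.ofReal_inv_of_pos hk, ENNReal.ofReal_coe_nnreal,
      ENNReal.inv_mul_le_iff (by simp) ENNReal.coe_ne_top]
    simp only [dBall_dist, id]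
    have hKmax : (K r : ℝ≥0∞) ≤ (max (K r) 1 : ℝ≥0) := by gcongr; exact le_max_left _ _
    exact ⟨hle.trans (by gcongr), hge.trans (by gcongr)⟩

structure IsNormalLeaf (μ : Measure X) (C : ℝ≥0) (L : Set X) (m : Measure X) : Prop where
  measure_compl : m Lᶜ = 0
  inv_le_measure : ∀ x ∈ L, (C : ℝ≥0∞)⁻¹ ≤ μ (closedBall x 1)
  measure_le : ∀ x ∈ L, μ (closedBall x 1) ≤ C
  inv_le_leafMeasure : ∀ x ∈ L, (C : ℝ≥0∞)⁻¹ ≤ m (closedBall x 1)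
  leafMeasure_le : ∀ x ∈ L, m (closedBall x 1) ≤ C

variable {Y : Type*} [MetricSpace Y] [MeasurableSpace Y] {lam : Measure Y}

theorem IsLSEBetween.measure_closedBall_comparison {F : Y → X} {P : LSEParams}
    (hF : IsLSEBetween (fun a b : Y => dist a b) univ lam (fun x y : X => dist x y) L m F P)
    {r : ℝ} (hr : P.r0 ≤ r) (a : Y) :
    lam (closedBall a r) ≤ ENNReal.ofReal (P.Cr r) * m (closedBall (F a) r ∩ L) ∧
      m (closedBall (F a) r ∩ L) ≤ ENNReal.ofReal (P.Cr r) * lam (closedBall a r) := by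
  obtain ⟨-, -, -, -, -, -, hvol⟩ := hF
  obtain ⟨hpos, hcmp⟩ := hvol r hr
  obtain ⟨hlow, hup⟩ := hcmp a (mem_univ a)
  simp only [dBall_dist, inter_univ] at hlow hup
  rw [ENNReal.ofReal_inv_of_pos hpos,
    ENNReal.inv_mul_le_iff (by simpa using hpos) ENNReal.ofReal_ne_top] at hlow
  exact ⟨hlow, hup⟩

theorem exists_leafMeasure_closedBall_add_le (hlam : LocDoubling (fun a b : Y => dist a b) lam)
    (P : LSEParams) {t : ℝ} (ht : 0 ≤ t) :
    ∃ r₁ : ℝ, ∀ ρ ≥ r₁, ∃ Q : ℝ≥0, ∀ (L : Set X) (m : Measure X) (F : Y → X),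
      IsLSEBetween (fun a b : Y => dist a b) univ lam (fun x y : X => dist x y) L m F P →
      m Lᶜ = 0 → ∀ x ∈ L, m (closedBall x (ρ + t)) ≤ Q * m (closedBall x ρ) := by
  refine ⟨max (P.r0 + P.C) (P.C + 1), fun ρ hρ => ?_⟩
  have hρ₀ : P.r0 + P.C ≤ ρ := le_of_max_le_left hρ
  have hρ₁ : P.C + 1 ≤ ρ := le_of_max_le_right hρ
  set R := ρ + t + P.C
  set r := ρ - P.C
  obtain ⟨D, -, hD⟩ := hlam.exists_measure_closedBall_le_mul_s12 (r := r) (by linarith) R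
  refine ⟨(P.Cr R).toNNReal * D * (P.Cr r).toNNReal, fun L m F hF hL x hx => ?_⟩
  obtain ⟨a, -, hax⟩ := hF.2.2.2.2.2.1 x hx
  have hC : 0 ≤ P.C := dist_nonneg.trans hax
  calc m (closedBall x (ρ + t)) = m (closedBall x (ρ + t) ∩ L) := (measure_inter_conull hL).symm
    _ ≤ m (closedBall (F a) R ∩ L) := by
        gcongr
        exact closedBall_subset_closedBall' (by rw [dist_comm]; linarith)
    _ ≤ ENNReal.ofReal (P.Cr R) * lam (closedBall a R) :=
        (hF.measure_closedBall_comparison (by linarith) a).2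
    _ ≤ ENNReal.ofReal (P.Cr R) * (D * lam (closedBall a r)) := by gcongr; exact hD a
    _ ≤ ENNReal.ofReal (P.Cr R) * (D * (ENNReal.ofReal (P.Cr r) * m (closedBall (F a) r ∩ L))) := by
        gcongr
        exact (hF.measure_closedBall_comparison (by linarith) a).1
    _ ≤ ENNReal.ofReal (P.Cr R) * (D * (ENNReal.ofReal (P.Cr r) * m (closedBall x ρ))) := by
        gcongr
        exact inter_subset_left.trans (closedBall_subset_closedBall' (by linarith))
    _ = ((P.Cr R).toNNReal * D * (P.Cr r).toNNReal : ℝ≥0) * m (closedBall x ρ) := by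
        simp only [ENNReal.ofReal, ENNReal.coe_mul]
        ring

variable [OpensMeasurableSpace X] {s A E : Set X} {a R : ℝ} {c M : ℝ≥0}

-- Count a maximal `2a`-separated net of `s`: its disjoint `a`-balls lie in `A`, and its
-- `R`-balls cover `E`.
theorem measure_le_of_packing (hc : c ≠ 0) (hM : M ≠ 0) (ha : 0 < a)
    (hA : ∀ t ∈ s, closedBall t a ⊆ A) (hν : ∀ t ∈ s, (c : ℝ≥0∞)⁻¹ ≤ ν (closedBall t a))
    (hμ : ∀ t ∈ s, μ (closedBall t R) ≤ M) (hE : ∀ w ∈ E, ∃ y ∈ s, dist w y + 2 * a ≤ R) :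
    μ E ≤ (c * M : ℝ≥0) * ν A := by
  obtain ⟨N, hNs, hNsep, hNcov⟩ := exists_separated_cover s (by positivity : 0 ≤ 2 * a)
  have hcount : (N.encard : ℝ≥0∞) ≤ c * ν A := by
    rw [mul_comm, ← ENNReal.mul_inv_le_iff (by simpa using hc) ENNReal.coe_ne_top]
    calc (N.encard : ℝ≥0∞) * (c : ℝ≥0∞)⁻¹ = ∑' _ : N, (c : ℝ≥0∞)⁻¹ := (ENNReal.tsum_const _).symm
      _ ≤ ∑' t : N, ν (closedBall t a) := ENNReal.tsum_le_tsum fun t => hν t (hNs t.2)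
      _ ≤ ν (⋃ t : N, closedBall t a) :=
        tsum_meas_le_meas_iUnion_of_disjoint ν (fun _ => measurableSet_closedBall)
          fun t t' htt' => closedBall_disjoint_closedBall
            (by linarith [hNsep t.2 t'.2 (Subtype.coe_ne_coe.2 htt')])
      _ ≤ ν A := measure_mono (iUnion_subset fun t => hA t (hNs t.2))
  have hEcov : E ⊆ ⋃ t ∈ N, closedBall t R := fun w hw => by
    obtain ⟨y, hy, hwy⟩ := hE w hw
    obtain ⟨t, ht, hyt⟩ := hNcov y hy
    exact mem_biUnion ht (mem_closedBall.2 (by linarith [dist_triangle w y t]))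
  have hμE : μ E ≤ N.encard * M := by
    rcases N.finite_or_infinite with hfin | hinf
    · calc μ E ≤ ∑' t : N, μ (closedBall t R) :=
            (measure_mono hEcov).trans (measure_biUnion_le μ hfin.countable _)
        _ ≤ ∑' _ : N, (M : ℝ≥0∞) := ENNReal.tsum_le_tsum fun t => hμ t (hNs t.2)
        _ = N.encard * M := ENNReal.tsum_const _
    · simp [hinf.encard_eq, hM]
  calc μ E ≤ N.encard * M := hμE
    _ ≤ (c * ν A) * M := by gcongr
    _ = (c * M : ℝ≥0) * ν A := by push_cast; ring

theorem measure_closedBall_inter_cthickening_le (hc : c ≠ 0) (hM : M ≠ 0) (ha : 0 < a)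
    (hm : ∀ t ∈ L, (c : ℝ≥0∞)⁻¹ ≤ m (closedBall t a))
    (hμ : ∀ t ∈ L, μ (closedBall t (4 * a)) ≤ M) (x : X) (ρ : ℝ) :
    μ (closedBall x ρ ∩ cthickening a L) ≤ (c * M : ℝ≥0) * m (closedBall x (ρ + 3 * a)) := by
  refine measure_le_of_packing (s := L ∩ closedBall x (ρ + 2 * a)) hc hM ha
    (fun t ht => closedBall_subset_closedBall' (by linarith [mem_closedBall.1 ht.2]))
    (fun t ht => hm t ht.1) (fun t ht => hμ t ht.1) fun w hw => ?_
  obtain ⟨y, hy, hwy⟩ := mem_thickening_iff.1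
    (cthickening_subset_thickening' (by positivity) (by linarith : a < 2 * a) L hw.2)
  refine ⟨y, ⟨hy, mem_closedBall.2 ?_⟩, by linarith⟩
  linarith [dist_triangle y w x, dist_comm w y, mem_closedBall.1 hw.1]

theorem measure_closedBall_le_mul_measure_inter_cthickening (hL : m Lᶜ = 0) (hc : c ≠ 0)
    (hM : M ≠ 0) (ha : 0 < a) (hμ : ∀ t ∈ L, (c : ℝ≥0∞)⁻¹ ≤ μ (closedBall t a))
    (hm : ∀ t ∈ L, m (closedBall t (2 * a)) ≤ M) (x : X) (ρ : ℝ) :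
    m (closedBall x ρ) ≤ (c * M : ℝ≥0) * μ (closedBall x (ρ + a) ∩ cthickening a L) := by
  rw [← measure_inter_conull hL]
  refine measure_le_of_packing (s := L ∩ closedBall x ρ) hc hM ha (fun t ht => ?_)
    (fun t ht => hμ t ht.1) (fun t ht => hm t ht.1) fun w hw => ⟨w, ⟨hw.2, hw.1⟩, by simp⟩
  exact subset_inter (closedBall_subset_closedBall' (by linarith [mem_closedBall.1 ht.2]))
    (closedBall_subset_cthickening ht.1 a)

theorem exists_leafMeasure_closedBall_two_le (hμ : LocDoubling (fun x y : X => dist x y) μ)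
    {C : ℝ≥0} (hC : C ≠ 0) :
    ∃ M : ℝ≥0, M ≠ 0 ∧
      ∀ L m, IsNormalLeaf μ C L m → ∀ x ∈ L, m (closedBall x 2) ≤ M := by
  obtain ⟨c, hc, hhalf⟩ := hμ.exists_inv_le_measure_closedBall (r := 1 / 2) (by norm_num) hC
  obtain ⟨D, hD, hthree⟩ := hμ.exists_measure_closedBall_le_mul_s12 one_pos 3
  refine ⟨c * C * (D * C), by positivity, fun L m hL x hx => ?_⟩
  calc m (closedBall x 2)
      ≤ (c * C : ℝ≥0) * μ (closedBall x (2 + 1 / 2) ∩ cthickening (1 / 2) L) :=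
        measure_closedBall_le_mul_measure_inter_cthickening hL.measure_compl hc hC (by norm_num)
          (fun t ht => hhalf t (hL.inv_le_measure t ht))
          (fun t ht => by simpa using hL.leafMeasure_le t ht) x 2
    _ ≤ (c * C : ℝ≥0) * μ (closedBall x 3) := by
        gcongr
        exact inter_subset_left.trans (closedBall_subset_closedBall (by norm_num))
    _ ≤ (c * C : ℝ≥0) * (D * C) := by
        gcongr
        exact (hthree x).trans (by gcongr; exact hL.measure_le x hx)
    _ = (c * C * (D * C) : ℝ≥0) := by push_cast; ring

theorem exists_uniform_leaf_volume_comparison (hμ : LocDoubling (fun x y : X => dist x y) μ)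
    (hlam : LocDoubling (fun a b : Y => dist a b) lam) (P : LSEParams) {C : ℝ≥0} (hC : C ≠ 0) :
    ∃ r₁ : ℝ, ∀ r ≥ r₁, ∃ K : ℝ≥0, ∀ (L : Set X) (m : Measure X) (F : Y → X),
      IsNormalLeaf μ C L m →
      IsLSEBetween (fun a b : Y => dist a b) univ lam (fun x y : X => dist x y) L m F P →
      ∀ x ∈ L, m (closedBall x r ∩ L) ≤ K * μ (closedBall x r ∩ cthickening 1 L) ∧
        μ (closedBall x r ∩ cthickening 1 L) ≤ K * m (closedBall x r ∩ L) := by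
  obtain ⟨D, hD, hfour⟩ := hμ.exists_measure_closedBall_le_mul_s12 one_pos 4
  obtain ⟨M, hM, htwo⟩ := exists_leafMeasure_closedBall_two_le hμ hC
  obtain ⟨r₁, hdbl⟩ := exists_leafMeasure_closedBall_add_le (X := X) hlam P (t := 3) (by norm_num)
  refine ⟨r₁ + 1, fun r hr => ?_⟩
  obtain ⟨Q, hQ⟩ := hdbl r (by linarith)
  obtain ⟨Q', hQ'⟩ := hdbl (r - 1) (by linarith)
  refine ⟨Q' * (C * M) + C * (D * C) * Q, fun L m F hL hF x hx => ⟨?_, ?_⟩⟩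
  · calc m (closedBall x r ∩ L) ≤ m (closedBall x (r - 1 + 3)) :=
          measure_mono (inter_subset_left.trans (closedBall_subset_closedBall (by linarith)))
      _ ≤ Q' * m (closedBall x (r - 1)) := hQ' L m F hF hL.measure_compl x hx
      _ ≤ Q' * ((C * M : ℝ≥0) * μ (closedBall x (r - 1 + 1) ∩ cthickening 1 L)) := by
          gcongr
          exact measure_closedBall_le_mul_measure_inter_cthickening hL.measure_compl hC hM one_pos
            hL.inv_le_measure (by simpa using htwo L m hL) x (r - 1)
      _ = (Q' * (C * M) : ℝ≥0) * μ (closedBall x r ∩ cthickening 1 L) := by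
          rw [sub_add_cancel]; push_cast; ring
      _ ≤ _ := by gcongr; exact le_self_add
  · calc μ (closedBall x r ∩ cthickening 1 L)
        ≤ (C * (D * C) : ℝ≥0) * m (closedBall x (r + 3 * 1)) :=
          measure_closedBall_inter_cthickening_le hC (mul_ne_zero hD hC) one_pos
            hL.inv_le_leafMeasure
            (fun t ht => by simpa using (hfour t).trans (by gcongr; exact hL.measure_le t ht)) x r
      _ ≤ (C * (D * C) : ℝ≥0) * (Q * m (closedBall x r)) := by
          rw [mul_one]; gcongr; exact hQ L m F hF hL.measure_compl x hx
      _ = (C * (D * C) * Q : ℝ≥0) * m (closedBall x r ∩ L) := by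
          rw [measure_inter_conull hL.measure_compl]; push_cast; ring
      _ ≤ _ := by gcongr; exact le_add_self

end

theorem leaf_inclusion_isLSE_general
    {X Y Z : Type*} [MetricSpace X] [MeasurableSpace X] [BorelSpace X]
    [MetricSpace Y] [MeasurableSpace Y] [MeasurableSpace Z]
    (μ : Measure X) (lam : Measure Y) (ν : Measure Z)
    (hXdbl : LocDoubling (fun x y : X => dist x y) μ)
    (hYdbl : LocDoubling (fun x y : Y => dist x y) lam)
    (leaf : Z → Set X) (lamz : Z → Measure X) (hmap : Z → Y → X) (P : LSEParams)
    (hfol : IsNormalLSFoliation (fun x y : X => dist x y) μ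
      (fun x y : Y => dist x y) lam ν leaf lamz hmap P) :
    ∃ P' : LSEParams, ∀ᵐ z ∂ν,
      IsLSEBetween (fun x y : X => dist x y) (leaf z) (lamz z)
        (fun x y : X => dist x y) (Metric.cthickening 1 (leaf z)) μ id P' := by
  obtain ⟨⟨-, hcompl, -, hleafLSE⟩, C, hC, hnormal⟩ := hfol
  simp only [dBall_dist] at hnormal
  have hleaf (z : Z) : IsNormalLeaf μ C.toNNReal (leaf z) (lamz z) :=
    ⟨hcompl z, fun x hx => (hnormal z x hx).1, fun x hx => (hnormal z x hx).2.1,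
      fun x hx => (hnormal z x hx).2.2.1, fun x hx => (hnormal z x hx).2.2.2⟩
  obtain ⟨r₁, hcmp⟩ :=
    exists_uniform_leaf_volume_comparison hXdbl hYdbl P (C := C.toNNReal)
      (Real.toNNReal_pos.2 (by linarith)).ne'
  choose! K hK using hcmp
  refine ⟨inclusionLSEParams 1 r₁ K, ?_⟩
  filter_upwards [hleafLSE] with z hz
  exact isLSEBetween_id_cthickening zero_le_one fun r hr x hx => hK r hr _ _ _ (hleaf z) hz x hx

/-- if `X` is normally large-scale foliated by `Y`, then, for parameters
independent of the leaf, the inclusion map `(Y_z, d_X, λ_z) → ([Y_z]_1, d_X, μ)` of a leaf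
into its `1`-neighborhood is a large-scale equivalence, for almost every `z`. -/
theorem leaf_inclusion_isLSE
    {X Y Z : Type*} [MetricSpace X] [MeasurableSpace X] [BorelSpace X]
    [MetricSpace Y] [MeasurableSpace Y] [BorelSpace Y] [MeasurableSpace Z]
    (μ : Measure X) (lam : Measure Y) (ν : Measure Z)
    (hμfin : FiniteOnBounded (fun x y : X => dist x y) μ)
    (hlamfin : FiniteOnBounded (fun x y : Y => dist x y) lam)
    (hXdbl : LocDoubling (fun x y : X => dist x y) μ)
    (hYdbl : LocDoubling (fun x y : Y => dist x y) lam)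
    (leaf : Z → Set X) (lamz : Z → Measure X) (hmap : Z → Y → X) (P : LSEParams)
    (hfol : IsNormalLSFoliation (fun x y : X => dist x y) μ
      (fun x y : Y => dist x y) lam ν leaf lamz hmap P) :
    ∃ P' : LSEParams, ∀ᵐ z ∂ν,
      IsLSEBetween (fun x y : X => dist x y) (leaf z) (lamz z)
        (fun x y : X => dist x y) (Metric.cthickening 1 (leaf z)) μ id P' :=
  leaf_inclusion_isLSE_general μ lam ν hXdbl hYdbl leaf lamz hmap P hfol
end
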